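/- Let A and B be symmetric positive semidefinite real n×n matrices. For fixed u, v ∈ ℝ^n, the infimum over w ∈ ℝ^n of ‖u - w‖_A^2 + ‖v - w‖_B^2 is attained at w = (A+B)^†(Au + Bv), and equals ‖u - v‖²_{H} where H = B(A+B)^†A(A+B)^†B + A(A+B)^†B(A+B)^†A = A(A+B)^†B. -/

import Mathlib

/-! The point `w₀ = P(Au + Bv)` solves the normal equation `A(u - w₀) + B(v - w₀) = 0`: for
positive semidefinite `A, B` we have `ker (A + B) ⊆ ker A`, so any generalized inverse `P` of
`A + B` satisfies `(A + B) P A = A` and `A P (A + B) = A`, and likewise for `B`. A stationary point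
of a convex quadratic is a minimizer, and substituting `B(v - w₀) = -A(u - w₀)` turns the minimal
value into `(u - v)ᵀ A (u - w₀) = (u - v)ᵀ A P B (u - v)`. The two range identities also force
`B P A = A P B`, from which the decomposition of `A P B` follows by ring manipulations. -/

open Matrix

/-- The four Penrose conditions characterizing the Moore–Penrose pseudoinverse. -/
def IsMoorePenrose {n : ℕ} (A P : Matrix (Fin n) (Fin n) ℝ) : Prop :=
  A * P * A = A ∧ P * A * P = P ∧ (A * P)ᵀ = A * P ∧ (P * A)ᵀ = P * A

theorem parallelSum_split {R : Type*} [Ring R] {A B P : R}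
    (h₁ : (A + B) * P * A = A) (h₂ : A * P * (A + B) = A) :
    B * P * A * P * B + A * P * B * P * A = A * P * B := by
  have hswap : B * P * A = A * P * B := by
    have e₁ : A * P * A + B * P * A = A := by rwa [add_mul, add_mul] at h₁
    have e₂ : A * P * A + A * P * B = A := by rwa [mul_add] at h₂
    exact add_left_cancel (e₁.trans e₂.symm)
  calc B * P * A * P * B + A * P * B * P * A = A * P * B * P * (A + B) := by
        rw [hswap]; noncomm_ring
    _ = B * P * (A * P * (A + B)) := by rw [← hswap]; noncomm_ring
    _ = A * P * B := by rw [h₂, hswap]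

namespace Matrix

theorem IsSymm.add_dotProduct_mulVec_add {m R : Type*} [Fintype m] [CommRing R]
    {A : Matrix m m R} (hA : A.IsSymm) (x y : m → R) :
    (x + y) ⬝ᵥ A *ᵥ (x + y) = x ⬝ᵥ A *ᵥ x + 2 * (y ⬝ᵥ A *ᵥ x) + y ⬝ᵥ A *ᵥ y := by
  have hcomm : x ⬝ᵥ A *ᵥ y = y ⬝ᵥ A *ᵥ x := by
    rw [dotProduct_mulVec, ← mulVec_transpose, hA.eq, dotProduct_comm]
  simp only [add_dotProduct, dotProduct_add, mulVec_add, hcomm]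
  ring

section RCLike

open scoped ComplexOrder

variable {m l 𝕜 : Type*} [Fintype m] [RCLike 𝕜] {A B : Matrix m m 𝕜}

theorem PosSemidef.mulVec_eq_zero_of_add_mulVec_eq_zero (hA : A.PosSemidef)
    (hB : B.PosSemidef) {x : m → 𝕜} (h : (A + B) *ᵥ x = 0) : A *ᵥ x = 0 := by
  have hsum : star x ⬝ᵥ A *ᵥ x + star x ⬝ᵥ B *ᵥ x = 0 := by
    rw [← dotProduct_add, ← add_mulVec, h, dotProduct_zero]
  have hzero := (add_eq_zero_iff_of_nonneg (hA.dotProduct_mulVec_nonneg x)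
    (hB.dotProduct_mulVec_nonneg x)).mp hsum
  exact (hA.dotProduct_mulVec_zero_iff x).mp hzero.1

theorem PosSemidef.mul_eq_zero_of_add_mul_eq_zero (hA : A.PosSemidef) (hB : B.PosSemidef)
    {M : Matrix m l 𝕜} (h : (A + B) * M = 0) : A * M = 0 := by
  ext i j
  have hcol : (A + B) *ᵥ (fun k => M k j) = 0 := funext fun i => congrFun (congrFun h i) j
  exact congrFun (hA.mulVec_eq_zero_of_add_mulVec_eq_zero hB hcol) i

theorem PosSemidef.mul_eq_zero_of_mul_add_eq_zero (hA : A.PosSemidef) (hB : B.PosSemidef)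
    {M : Matrix l m 𝕜} (h : M * (A + B) = 0) : M * A = 0 := by
  have h' : (A + B) * Mᴴ = 0 := by
    rw [← (hA.add hB).isHermitian.eq, ← conjTranspose_mul, h, conjTranspose_zero]
  rw [← conjTranspose_conjTranspose (M * A), conjTranspose_mul, hA.isHermitian.eq,
    hA.mul_eq_zero_of_add_mul_eq_zero hB h', conjTranspose_zero]

variable [DecidableEq m] {P : Matrix m m 𝕜}

theorem PosSemidef.add_mul_mul_eq_self (hA : A.PosSemidef) (hB : B.PosSemidef)
    (hP : (A + B) * P * (A + B) = A + B) : (A + B) * P * A = A := by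
  have h := hA.mul_eq_zero_of_mul_add_eq_zero hB (M := 1 - (A + B) * P)
    (by rw [sub_mul, one_mul, hP, sub_self])
  rwa [sub_mul, one_mul, sub_eq_zero, eq_comm] at h

theorem PosSemidef.mul_mul_add_eq_self (hA : A.PosSemidef) (hB : B.PosSemidef)
    (hP : (A + B) * P * (A + B) = A + B) : A * P * (A + B) = A := by
  have h := hA.mul_eq_zero_of_add_mul_eq_zero hB (M := 1 - P * (A + B))
    (by rw [mul_sub, mul_one, ← mul_assoc, hP, sub_self])
  rwa [mul_sub, mul_one, sub_eq_zero, eq_comm, ← mul_assoc] at h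

end RCLike

section Real

variable {m : Type*} [Fintype m] {A B : Matrix m m ℝ}

def quadCost (A B : Matrix m m ℝ) (u v w : m → ℝ) : ℝ :=
  (u - w) ⬝ᵥ A *ᵥ (u - w) + (v - w) ⬝ᵥ B *ᵥ (v - w)

variable {u v w₀ : m → ℝ}

theorem quadCost_le_of_mulVec_add_mulVec_eq_zero (hA : A.PosSemidef) (hB : B.PosSemidef)
    (h : A *ᵥ (u - w₀) + B *ᵥ (v - w₀) = 0) (w : m → ℝ) :
    quadCost A B u v w₀ ≤ quadCost A B u v w := by
  have hcross : (w₀ - w) ⬝ᵥ A *ᵥ (u - w₀) + (w₀ - w) ⬝ᵥ B *ᵥ (v - w₀) = 0 := by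
    rw [← dotProduct_add, h, dotProduct_zero]
  have hAd := hA.dotProduct_mulVec_nonneg (w₀ - w)
  have hBd := hB.dotProduct_mulVec_nonneg (w₀ - w)
  simp only [star_trivial] at hAd hBd
  have hu : u - w = (u - w₀) + (w₀ - w) := by abel
  have hv : v - w = (v - w₀) + (w₀ - w) := by abel
  rw [quadCost, quadCost, hu, hv,
    (isHermitian_iff_isSymm.mp hA.isHermitian).add_dotProduct_mulVec_add,
    (isHermitian_iff_isSymm.mp hB.isHermitian).add_dotProduct_mulVec_add]
  linarith

theorem quadCost_eq_of_mulVec_add_mulVec_eq_zero (h : A *ᵥ (u - w₀) + B *ᵥ (v - w₀) = 0) :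
    quadCost A B u v w₀ = (u - v) ⬝ᵥ A *ᵥ (u - w₀) := by
  rw [quadCost, eq_neg_of_add_eq_zero_right h, dotProduct_neg, ← sub_eq_add_neg,
    ← sub_dotProduct, sub_sub_sub_cancel_right]

end Real

end Matrix

theorem inf_attained_harmonic {n : ℕ} (A B P : Matrix (Fin n) (Fin n) ℝ)
    (hA : A.PosSemidef) (hB : B.PosSemidef)
    (hP : IsMoorePenrose (A + B) P) (u v : Fin n → ℝ) :
    (∀ w : Fin n → ℝ,
        (u - P.mulVec (A.mulVec u + B.mulVec v)) ⬝ᵥ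
            A.mulVec (u - P.mulVec (A.mulVec u + B.mulVec v)) +
          (v - P.mulVec (A.mulVec u + B.mulVec v)) ⬝ᵥ
            B.mulVec (v - P.mulVec (A.mulVec u + B.mulVec v)) ≤
        (u - w) ⬝ᵥ A.mulVec (u - w) + (v - w) ⬝ᵥ B.mulVec (v - w)) ∧
    ((u - P.mulVec (A.mulVec u + B.mulVec v)) ⬝ᵥ
        A.mulVec (u - P.mulVec (A.mulVec u + B.mulVec v)) +
      (v - P.mulVec (A.mulVec u + B.mulVec v)) ⬝ᵥ
        B.mulVec (v - P.mulVec (A.mulVec u + B.mulVec v)) =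
      (u - v) ⬝ᵥ (A * P * B).mulVec (u - v)) ∧
    B * P * A * P * B + A * P * B * P * A = A * P * B := by
  have hSA : (A + B) * P * A = A := hA.add_mul_mul_eq_self hB hP.1
  have hSB : (A + B) * P * B = B := by
    rw [add_comm] at hP ⊢
    exact hB.add_mul_mul_eq_self hA hP.1
  have hAS : A * P * (A + B) = A := hA.mul_mul_add_eq_self hB hP.1
  set w₀ := P *ᵥ (A *ᵥ u + B *ᵥ v)
  have hstat : A *ᵥ (u - w₀) + B *ᵥ (v - w₀) = 0 := by
    have hw₀ : (A + B) *ᵥ w₀ = A *ᵥ u + B *ᵥ v := by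
      simp only [w₀, mulVec_add, mulVec_mulVec, ← mul_assoc, hSA, hSB]
    rw [mulVec_sub, mulVec_sub, sub_add_sub_comm, ← add_mulVec, hw₀, sub_self]
  have hres : A *ᵥ (u - w₀) = (A * P * B) *ᵥ (u - v) := by
    have hAPB : A * P * B = A - A * P * A := eq_sub_of_add_eq' (by rwa [mul_add] at hAS)
    simp only [w₀, mulVec_sub, mulVec_add, mulVec_mulVec, ← mul_assoc, hAPB, sub_mulVec]
    abel
  refine ⟨quadCost_le_of_mulVec_add_mulVec_eq_zero hA hB hstat, ?_,
    parallelSum_split hSA hAS⟩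
  rw [← hres]
  exact quadCost_eq_of_mulVec_add_mulVec_eq_zero hstat
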